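/- arXiv:1707.00460 — 6 statements merged into one kernel-verified Lean document; each statement's English description precedes it below -/
import Mathlib

section
/- Let κ > 0, γ ∈ (0, 1/κ), a ∈ [0, κ/8), and define the sequence α₀ = 2a, α_{ℓ} = α_{ℓ−1}(1−κγ)/(1−4α_{ℓ−1}γ) for ℓ ≥ 1. Then for all ℓ ≥ 0, α_ℓ ≤ 2a ((1−κγ)/(1−8aγ))^ℓ; in particular the sequence (α_ℓ) is nonincreasing and Σ_{ℓ=0}^{p−1} α_ℓ ≤ 2a(1−8aγ)/(κγ−8aγ) for every p ≥ 1. -/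
/-! The recursion is `α ↦ f α` with `f x = x (1 - κγ) / (1 - 4γx)`. On `[0, 2a]` the
denominator is at least `1 - 8aγ`, so `f x ≤ r x` with `r = (1 - κγ) / (1 - 8aγ) < 1`,
and `f` maps `[0, 2a]` into itself. Hence `α_ℓ ≤ 2a r^ℓ`, the sequence decreases, and its
partial sums are bounded by `2a / (1 - r)`. -/

open Finset

section Contraction

variable {κ γ c x : ℝ}

lemma mul_div_le_contraction_mul (hx : 0 ≤ x) (hxc : x ≤ c) (hγ : 0 ≤ γ)
    (hc : 4 * c * γ < 1) (hκ : κ * γ ≤ 1) :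
    x * (1 - κ * γ) / (1 - 4 * x * γ) ≤ (1 - κ * γ) / (1 - 4 * c * γ) * x := by
  rw [div_mul_eq_mul_div, mul_comm (1 - κ * γ) x]
  exact div_le_div_of_nonneg_left (mul_nonneg hx (by linarith)) (by linarith)
    (by nlinarith)

lemma contraction_nonneg (hc : 4 * c * γ < 1) (hκ : κ * γ ≤ 1) :
    0 ≤ (1 - κ * γ) / (1 - 4 * c * γ) :=
  div_nonneg (by linarith) (by linarith)

lemma contraction_lt_one (hγ : 0 < γ) (hcκ : 4 * c < κ) (hc : 4 * c * γ < 1) :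
    (1 - κ * γ) / (1 - 4 * c * γ) < 1 :=
  (div_lt_one (by linarith)).mpr (by nlinarith)

lemma one_sub_contraction (hc : 4 * c * γ < 1) :
    1 - (1 - κ * γ) / (1 - 4 * c * γ) = (κ * γ - 4 * c * γ) / (1 - 4 * c * γ) := by
  rw [eq_div_iff (by linarith), sub_mul, div_mul_cancel₀ _ (by linarith)]
  ring

end Contraction

lemma sum_range_le_div_one_sub {u : ℕ → ℝ} {u₀ r : ℝ} (hu₀ : 0 ≤ u₀) (hr₀ : 0 ≤ r)
    (hr₁ : r < 1) (hu : ∀ n, u n ≤ u₀ * r ^ n) (p : ℕ) :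
    ∑ n ∈ range p, u n ≤ u₀ / (1 - r) := by
  calc ∑ n ∈ range p, u n ≤ u₀ * ∑ n ∈ range p, r ^ n := by
        rw [mul_sum]; exact sum_le_sum fun n _ => hu n
    _ ≤ u₀ * (r ^ 0 / (1 - r)) := by
        rw [range_eq_Ico]; exact mul_le_mul_of_nonneg_left (geom_sum_Ico_le_of_lt_one hr₀ hr₁) hu₀
    _ = u₀ / (1 - r) := by rw [pow_zero, mul_one_div]

theorem stmt5 (κ γ a : ℝ) (hκ : 0 < κ) (hγ : γ ∈ Set.Ioo 0 (1 / κ))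
    (ha : a ∈ Set.Ico 0 (κ / 8))
    (α : ℕ → ℝ) (hα0 : α 0 = 2 * a)
    (hαrec : ∀ ℓ, α (ℓ + 1) = α ℓ * (1 - κ * γ) / (1 - 4 * α ℓ * γ)) :
    (∀ ℓ, α ℓ ≤ 2 * a * ((1 - κ * γ) / (1 - 8 * a * γ)) ^ ℓ) ∧
    (∀ ℓ, α (ℓ + 1) ≤ α ℓ) ∧
    (∀ p, 1 ≤ p →
      ∑ ℓ ∈ Finset.range p, α ℓ ≤ 2 * a * (1 - 8 * a * γ) / (κ * γ - 8 * a * γ)) := by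
  obtain ⟨hγ₀, hγκ⟩ := hγ
  obtain ⟨ha₀, haκ⟩ := ha
  have hκγ : κ * γ < 1 := by rwa [lt_div_iff₀ hκ, mul_comm] at hγκ
  rw [show 8 * a = 4 * (2 * a) by ring]
  have hcκ : 4 * (2 * a) < κ := by linarith
  have hcγ : 4 * (2 * a) * γ < 1 := by nlinarith
  set r := (1 - κ * γ) / (1 - 4 * (2 * a) * γ)
  have hr₀ : 0 ≤ r := contraction_nonneg hcγ hκγ.le
  have hr₁ : r < 1 := contraction_lt_one hγ₀ hcκ hcγ
  have hstep : ∀ ℓ, 0 ≤ α ℓ → α ℓ ≤ 2 * a → α (ℓ + 1) ≤ r * α ℓ := fun ℓ h₀ h₁ => by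
    rw [hαrec]; exact mul_div_le_contraction_mul h₀ h₁ hγ₀.le hcγ hκγ.le
  have hbounds : ∀ ℓ, 0 ≤ α ℓ ∧ α ℓ ≤ 2 * a := by
    intro ℓ
    induction ℓ with
    | zero => rw [hα0]; exact ⟨by linarith, le_rfl⟩
    | succ n ih =>
      refine ⟨?_, (hstep n ih.1 ih.2).trans ?_⟩
      · rw [hαrec]; exact div_nonneg (mul_nonneg ih.1 (by linarith)) (by nlinarith)
      · exact (mul_le_of_le_one_left ih.1 hr₁.le).trans ih.2
  have hgeom : ∀ ℓ, α ℓ ≤ 2 * a * r ^ ℓ := fun ℓ => by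
    rw [← hα0, mul_comm]
    exact le_geom hr₀ ℓ fun k _ => hstep k (hbounds k).1 (hbounds k).2
  refine ⟨hgeom, fun ℓ => ?_, fun p _ => ?_⟩
  · exact (hstep ℓ (hbounds ℓ).1 (hbounds ℓ).2).trans (mul_le_of_le_one_left (hbounds ℓ).1 hr₁.le)
  · have hsum := sum_range_le_div_one_sub (by linarith) hr₀ hr₁ hgeom p
    rwa [one_sub_contraction hcγ, div_div_eq_mul_div] at hsum
end

section
/- For m > 0, d ≥ 1, a ∈ (0, m/(4(d+4))], one has sup_{t ≥ 0} e^{2at}(2d + 4a(4a−m)t²) ≤ 4d. -/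
theorem stmt6 (d : ℕ) (hd : 1 ≤ d) (m a : ℝ) (hm : 0 < m) (ha : 0 < a)
    (ha2 : a ≤ m / (4 * ((d : ℝ) + 4))) :
    ∀ t : ℝ, 0 ≤ t →
      Real.exp (2 * a * t) * (2 * (d : ℝ) + 4 * a * (4 * a - m) * t ^ 2) ≤ 4 * (d : ℝ) := by
  intro t ht
  have hd1 : (1:ℝ) ≤ (d:ℝ) := by exact_mod_cast hd
  have hden : (0:ℝ) < 4 * ((d : ℝ) + 4) := by positivity
  have hm' : a * (4 * ((d:ℝ) + 4)) ≤ m := by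
    rw [le_div_iff₀ hden] at ha2; linarith
  have key : 8 * a^2 * (d:ℝ) ≤ 4 * a * (m - 4*a) := by
    nlinarith [sq_nonneg a, mul_pos ha ha]
  by_cases hP : 2 * (d : ℝ) + 4 * a * (4 * a - m) * t ^ 2 ≤ 0
  · have he := Real.exp_pos (2*a*t)
    nlinarith [mul_nonpos_of_nonneg_of_nonpos he.le hP]
  · push_neg at hP
    have h2at : 2*a*t < 1 := by
      by_contra h
      push_neg at h
      nlinarith [sq_nonneg (2*a*t - 1), mul_pos ha ha, sq_nonneg t]
    have hpos : 0 < 1 - 2*a*t := by linarith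
    have h1 : 1 - 2*a*t ≤ Real.exp (-(2*a*t)) := by
      have := Real.add_one_le_exp (-(2*a*t)); linarith
    have hexp1 : Real.exp (2*a*t) * (1 - 2*a*t) ≤ 1 := by
      calc Real.exp (2*a*t) * (1 - 2*a*t)
          ≤ Real.exp (2*a*t) * Real.exp (-(2*a*t)) :=
            mul_le_mul_of_nonneg_left h1 (Real.exp_pos _).le
        _ = 1 := by rw [← Real.exp_add]; simp
    have hexp : Real.exp (2*a*t) ≤ 1 / (1 - 2*a*t) := by
      rw [le_div_iff₀ hpos]; exact hexp1
    have h3 : Real.exp (2 * a * t) * (2 * (d : ℝ) + 4 * a * (4 * a - m) * t ^ 2)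
        ≤ (1 / (1 - 2*a*t)) * (2 * (d : ℝ) + 4 * a * (4 * a - m) * t ^ 2) :=
      mul_le_mul_of_nonneg_right hexp hP.le
    have h4 : (1 / (1 - 2*a*t)) * (2 * (d : ℝ) + 4 * a * (4 * a - m) * t ^ 2)
        ≤ 4 * (d:ℝ) := by
      rw [one_div, inv_mul_le_iff₀ hpos]
      nlinarith [sq_nonneg (2*a*t - 1), sq_nonneg t]
    linarith
end

section
/- Let U : ℝ^d → ℝ be C² with ∇U(0)=0, m-strongly convex with m > 0, and let a ∈ (0, m/(4(d+4))]. For the Langevin generator 𝒜f = −⟨∇U, ∇f⟩ + Δf applied to f(x) = ‖x‖² e^{2a‖x‖²}, the pointwise bound 𝒜f(x) ≤ −m‖x‖² e^{2a‖x‖²} + 4d holds for all x ∈ ℝ^d. -/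
open Real
open scoped InnerProductSpace

/-- The Langevin generator `𝒜 f = -⟨∇U, ∇f⟩ + Δf` applied to
`f x = ‖x‖² exp (2a‖x‖²)`, using the explicit formulas
`∇f x = 2(1+2a‖x‖²) x e^{2a‖x‖²}` and
`Δf x = e^{2a‖x‖²}(16a²‖x‖⁴ + 4a(d+4)‖x‖² + 2d)`. -/
theorem stmt7 (d : ℕ) (U : EuclideanSpace ℝ (Fin d) → ℝ)
    (U' : EuclideanSpace ℝ (Fin d) → EuclideanSpace ℝ (Fin d))
    (m a : ℝ) (hm : 0 < m) (ha : 0 < a) (ha2 : a ≤ m / (4 * ((d : ℝ) + 4)))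
    (hC2 : ContDiff ℝ 2 U)
    (hgrad : ∀ x, HasGradientAt U (U' x) x)
    (hU'0 : U' 0 = 0)
    (hmono : ∀ x y, m * ‖y - x‖ ^ 2 ≤ ⟪U' y - U' x, y - x⟫_ℝ) :
    ∀ x : EuclideanSpace ℝ (Fin d),
      -⟪U' x, (2 * (1 + 2 * a * ‖x‖ ^ 2) * Real.exp (2 * a * ‖x‖ ^ 2)) • x⟫_ℝ +
          Real.exp (2 * a * ‖x‖ ^ 2) *
            (16 * a ^ 2 * ‖x‖ ^ 4 + 4 * a * ((d : ℝ) + 4) * ‖x‖ ^ 2 + 2 * (d : ℝ)) ≤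
        -(m * ‖x‖ ^ 2 * Real.exp (2 * a * ‖x‖ ^ 2)) + 4 * (d : ℝ) := by
  intro x
  have hdn : (0:ℝ) ≤ (d:ℝ) := Nat.cast_nonneg d
  have h4a : 4 * a * ((d:ℝ) + 4) ≤ m := by
    rw [le_div_iff₀ (by positivity)] at ha2; linarith
  set t : ℝ := ‖x‖ ^ 2 with htdef
  have ht0 : 0 ≤ t := by positivity
  set s : ℝ := 2 * a * t with hsdef
  have hs0 : 0 ≤ s := by positivity
  have hEpos : 0 < Real.exp s := Real.exp_pos s
  -- scalar key inequality
  have hmain : Real.exp s * (2 * (d:ℝ) - 3 * ((d:ℝ) + 4) * s ^ 2) ≤ 4 * d := by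
    rcases le_or_gt (2 * (d:ℝ) - 3 * ((d:ℝ) + 4) * s ^ 2) 0 with hP | hP
    · nlinarith [mul_nonneg hEpos.le (neg_nonneg.2 hP)]
    · have hs2 : s ^ 2 < 1 := by nlinarith
      have hs1 : s < 1 := by nlinarith
      have h1s : 0 < 1 - s := by linarith
      have key : (1 - s) * Real.exp s ≤ 1 := by
        have h := Real.add_one_le_exp (-s)
        rw [Real.exp_neg] at h
        have h2 := mul_le_mul_of_nonneg_right h hEpos.le
        rwa [inv_mul_cancel₀ hEpos.ne', show -s + 1 = 1 - s by ring] at h2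
      have hA : Real.exp s * (2 * (d:ℝ) - 3 * ((d:ℝ) + 4) * s ^ 2) * (1 - s)
          ≤ 2 * (d:ℝ) - 3 * ((d:ℝ) + 4) * s ^ 2 := by
        nlinarith [mul_le_mul_of_nonneg_left key hP.le]
      have hB : 2 * (d:ℝ) - 3 * ((d:ℝ) + 4) * s ^ 2 ≤ 4 * d * (1 - s) := by
        nlinarith [mul_nonneg hdn (sq_nonneg (3 * s - 2)), sq_nonneg s]
      exact le_of_mul_le_mul_right (hA.trans hB) h1s
  -- bound inner product
  have hinner : m * t ≤ ⟪U' x, x⟫_ℝ := by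
    have h := hmono 0 x
    simpa [hU'0, htdef] using h
  have hc : 0 ≤ 2 * (1 + 2 * a * t) * Real.exp s := by positivity
  rw [real_inner_smul_right]
  have hip := mul_le_mul_of_nonneg_left hinner hc
  have h4 : ‖x‖ ^ 4 = t ^ 2 := by rw [htdef]; ring
  rw [h4]
  -- polynomial bound
  have hgP : 16 * a ^ 2 * t ^ 2 + 4 * a * ((d:ℝ) + 4) * t + 2 * d - m * t - 4 * a * m * t ^ 2
      ≤ 2 * (d:ℝ) - 3 * ((d:ℝ) + 4) * s ^ 2 := by
    rw [hsdef]
    nlinarith [mul_nonneg (sub_nonneg.2 h4a) ht0,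
      mul_nonneg (mul_nonneg (sub_nonneg.2 h4a) ha.le) (sq_nonneg t),
      mul_nonneg (mul_nonneg hdn (sq_nonneg a)) (sq_nonneg t)]
  have hEg := mul_le_mul_of_nonneg_left hgP hEpos.le
  simp only [hsdef] at hmain hEg hip ⊢
  nlinarith [hEg.trans hmain, hip]
end

section
/- Let 0 < m ≤ L and for σ² > 0 define m(σ²) = m + 1/σ², L(σ²) = L + 1/σ², κ(σ²) = 2m(σ²)L(σ²)/(m(σ²)+L(σ²)). Then the function σ² ↦ κ(σ²)·σ² is nondecreasing on (0, ∞), and √(m(σ²))/(κ(σ²)·σ) is nonincreasing in σ² and is at most 1. -/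
/-!
Write `a = m σ² + 1` and `b = L σ² + 1`, both increasing in `σ²`. Then `κ(σ²) σ² = 2 / (a⁻¹ + b⁻¹)`
is the harmonic mean of `a` and `b`, hence nondecreasing, and
`√(m(σ²)) / (κ(σ²) σ) = ½ · a^{-1/2} · (1 + a / b)` is a product of two nonnegative nonincreasing
factors (`a / b` decreases because `m ≤ L`); as `a ≥ 1` and `a ≤ b`, it is at most `½ · 1 · 2 = 1`.
-/

open Set

/-- `κ(σ²)`, written as a function of `s = σ²`. -/
noncomputable def kappa (m L s : ℝ) : ℝ :=
  2 * (m + 1 / s) * (L + 1 / s) / ((m + 1 / s) + (L + 1 / s))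

lemma kappa_mul_eq_harmonicMean {m L s : ℝ} (hm : 0 ≤ m) (hL : 0 ≤ L) (hs : 0 < s) :
    kappa m L s * s = 2 / ((m * s + 1)⁻¹ + (L * s + 1)⁻¹) := by
  have ha : 0 < m * s + 1 := by positivity
  have hb : 0 < L * s + 1 := by positivity
  unfold kappa
  field_simp
  ring

lemma sqrt_div_kappa_mul_sqrt_eq {m L s : ℝ} (hm : 0 ≤ m) (hL : 0 ≤ L) (hs : 0 < s) :
    √(m + 1 / s) / (kappa m L s * √s) =
      1 / 2 * (√(m * s + 1))⁻¹ * (1 + (m * s + 1) / (L * s + 1)) := by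
  have ha : 0 < m * s + 1 := by positivity
  have hb : 0 < L * s + 1 := by positivity
  have hsqrt_a : 0 < √(m * s + 1) := Real.sqrt_pos.2 ha
  have hsqrt_s : 0 < √s := Real.sqrt_pos.2 hs
  have hm_add : m + 1 / s = (m * s + 1) / s := by field_simp
  rw [hm_add, Real.sqrt_div ha.le]
  unfold kappa
  field_simp
  rw [Real.sq_sqrt hs.le, Real.sq_sqrt ha.le]
  ring

lemma antitoneOn_affine_div_affine {m L : ℝ} (hmL : m ≤ L) (hL : 0 ≤ L) :
    AntitoneOn (fun s => (m * s + 1) / (L * s + 1)) (Ioi 0) := by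
  intro s hs t ht hst
  simp only [mem_Ioi] at hs ht
  rw [div_le_div_iff₀ (by positivity) (by positivity)]
  nlinarith [mul_nonneg (sub_nonneg.2 hmL) (sub_nonneg.2 hst)]

theorem stmt10 (m L : ℝ) (hm : 0 < m) (hmL : m ≤ L) :
    MonotoneOn (fun s : ℝ =>
        2 * (m + 1 / s) * (L + 1 / s) / ((m + 1 / s) + (L + 1 / s)) * s)
      (Set.Ioi 0) ∧
    AntitoneOn (fun s : ℝ =>
        Real.sqrt (m + 1 / s) /
          (2 * (m + 1 / s) * (L + 1 / s) / ((m + 1 / s) + (L + 1 / s)) * Real.sqrt s))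
      (Set.Ioi 0) ∧
    ∀ s : ℝ, 0 < s →
      Real.sqrt (m + 1 / s) /
          (2 * (m + 1 / s) * (L + 1 / s) / ((m + 1 / s) + (L + 1 / s)) * Real.sqrt s) ≤ 1 := by
  have hm₀ : 0 ≤ m := hm.le
  have hL : 0 ≤ L := hm₀.trans hmL
  change MonotoneOn (fun s => kappa m L s * s) (Ioi 0) ∧
    AntitoneOn (fun s => √(m + 1 / s) / (kappa m L s * √s)) (Ioi 0) ∧
    ∀ s : ℝ, 0 < s → √(m + 1 / s) / (kappa m L s * √s) ≤ 1
  refine ⟨fun s hs t ht hst => ?_, fun s hs t ht hst => ?_, fun s hs => ?_⟩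
  · simp only [mem_Ioi] at hs ht
    dsimp only
    rw [kappa_mul_eq_harmonicMean hm₀ hL hs, kappa_mul_eq_harmonicMean hm₀ hL ht]
    gcongr
  · have hratio := antitoneOn_affine_div_affine hmL hL hs ht hst
    simp only [mem_Ioi] at hs ht
    dsimp only at hratio ⊢
    rw [sqrt_div_kappa_mul_sqrt_eq hm₀ hL hs, sqrt_div_kappa_mul_sqrt_eq hm₀ hL ht]
    gcongr
  · have hsqrt : 1 ≤ √(m * s + 1) := Real.one_le_sqrt.2 (by nlinarith)
    have hratio : (m * s + 1) / (L * s + 1) ≤ 1 :=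
      div_le_one_of_le₀ (by gcongr) (by positivity)
    calc √(m + 1 / s) / (kappa m L s * √s)
        = 1 / 2 * (√(m * s + 1))⁻¹ * (1 + (m * s + 1) / (L * s + 1)) :=
          sqrt_div_kappa_mul_sqrt_eq hm₀ hL hs
      _ ≤ 1 / 2 * 1 * (1 + 1) := by gcongr; exact inv_le_one_of_one_le₀ hsqrt
      _ = 1 := by norm_num
end

section
/- Let κ > 0 and (γ_k) be positive reals with κγ_k ≤ 1 for all k. Then for any N ≥ 0, n ≥ 1, Σ_{i=N+1}^{N+n} (γ_{i+1}/Γ) Π_{ℓ=N+2}^{i} (1−κγ_ℓ)^{1/2} ≤ 2/(κΓ), where Γ = Σ_{k=N+2}^{N+n+1} γ_k. (Uses (1−t)^{1/2} ≤ 1 − t/2 for t ∈ [0,1].) -/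
private lemma sqrt_le_one_sub_half (κ t : ℝ) (hκ : 0 < κ) (ht : 0 < t) (hbd : κ * t ≤ 1) :
    Real.sqrt (1 - κ * t) ≤ 1 - κ * t / 2 := by
  have h0 : 0 ≤ κ * t := le_of_lt (mul_pos hκ ht)
  have h1 : 1 - κ * t ≤ (1 - κ * t / 2) ^ 2 := by nlinarith
  have := Real.sqrt_le_sqrt h1
  rwa [Real.sqrt_sq (by nlinarith)] at this

private lemma telescope (κ : ℝ) (hκ : 0 < κ) (γ : ℕ → ℝ) (hpos : ∀ k, 0 < γ k)
    (hbd : ∀ k, κ * γ k ≤ 1) (N : ℕ) : ∀ n : ℕ,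
    ∑ i ∈ Finset.Icc (N + 1) (N + n),
        γ (i + 1) * ∏ ℓ ∈ Finset.Icc (N + 2) i, Real.sqrt (1 - κ * γ ℓ) ≤
      2 / κ * (1 - ∏ ℓ ∈ Finset.Icc (N + 2) (N + n + 1), Real.sqrt (1 - κ * γ ℓ)) := by
  intro n
  induction n with
  | zero =>
    simp [Finset.Icc_eq_empty_of_lt (by omega : N + 1 > N + 0),
      Finset.Icc_eq_empty_of_lt (by omega : N + 2 > N + 0 + 1)]
  | succ m ih =>
    have hsum : ∑ i ∈ Finset.Icc (N + 1) (N + (m + 1)),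
        γ (i + 1) * ∏ ℓ ∈ Finset.Icc (N + 2) i, Real.sqrt (1 - κ * γ ℓ)
        = (∑ i ∈ Finset.Icc (N + 1) (N + m),
            γ (i + 1) * ∏ ℓ ∈ Finset.Icc (N + 2) i, Real.sqrt (1 - κ * γ ℓ))
          + γ (N + m + 2) * ∏ ℓ ∈ Finset.Icc (N + 2) (N + m + 1), Real.sqrt (1 - κ * γ ℓ) := by
      have : N + (m + 1) = (N + m) + 1 := by omega
      rw [this, Finset.sum_Icc_succ_top (by omega : N + 1 ≤ N + m + 1)]
    have hprod : ∏ ℓ ∈ Finset.Icc (N + 2) (N + (m + 1) + 1), Real.sqrt (1 - κ * γ ℓ)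
        = (∏ ℓ ∈ Finset.Icc (N + 2) (N + m + 1), Real.sqrt (1 - κ * γ ℓ))
          * Real.sqrt (1 - κ * γ (N + m + 2)) := by
      have : N + (m + 1) + 1 = (N + m + 1) + 1 := by omega
      rw [this, Finset.prod_Icc_succ_top (by omega : N + 2 ≤ N + m + 1 + 1)]
    set P := ∏ ℓ ∈ Finset.Icc (N + 2) (N + m + 1), Real.sqrt (1 - κ * γ ℓ) with hP
    have hPnn : 0 ≤ P := Finset.prod_nonneg fun _ _ => Real.sqrt_nonneg _
    have hstep : γ (N + m + 2) * P ≤ 2 / κ * (P - P * Real.sqrt (1 - κ * γ (N + m + 2))) := by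
      have h := sqrt_le_one_sub_half κ (γ (N + m + 2)) hκ (hpos _) (hbd _)
      have : P * Real.sqrt (1 - κ * γ (N + m + 2)) ≤ P * (1 - κ * γ (N + m + 2) / 2) :=
        mul_le_mul_of_nonneg_left h hPnn
      rw [div_mul_eq_mul_div, le_div_iff₀ hκ]
      nlinarith
    rw [hsum, hprod]
    nlinarith [ih]

theorem stmt18 (κ : ℝ) (hκ : 0 < κ) (γ : ℕ → ℝ) (hpos : ∀ k, 0 < γ k)
    (hbd : ∀ k, κ * γ k ≤ 1) (N n : ℕ) (hn : 1 ≤ n)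
    (Γ : ℝ) (hΓ : Γ = ∑ k ∈ Finset.Icc (N + 2) (N + n + 1), γ k) :
    ∑ i ∈ Finset.Icc (N + 1) (N + n),
        γ (i + 1) / Γ * ∏ ℓ ∈ Finset.Icc (N + 2) i, Real.sqrt (1 - κ * γ ℓ) ≤
      2 / (κ * Γ) := by
  have hΓpos : 0 < Γ := by
    rw [hΓ]
    apply Finset.sum_pos (fun k _ => hpos k)
    exact ⟨N + 2, by simp [Finset.mem_Icc]; omega⟩
  have key := telescope κ hκ γ hpos hbd N n
  have hPnn : 0 ≤ ∏ ℓ ∈ Finset.Icc (N + 2) (N + n + 1), Real.sqrt (1 - κ * γ ℓ) :=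
    Finset.prod_nonneg fun _ _ => Real.sqrt_nonneg _
  have key2 : ∑ i ∈ Finset.Icc (N + 1) (N + n),
      γ (i + 1) * ∏ ℓ ∈ Finset.Icc (N + 2) i, Real.sqrt (1 - κ * γ ℓ) ≤ 2 / κ := by
    calc _ ≤ 2 / κ * (1 - ∏ ℓ ∈ Finset.Icc (N + 2) (N + n + 1), Real.sqrt (1 - κ * γ ℓ)) := key
    _ ≤ 2 / κ * 1 := by
        apply mul_le_mul_of_nonneg_left (by linarith) (by positivity)
    _ = 2 / κ := mul_one _
  have : ∑ i ∈ Finset.Icc (N + 1) (N + n),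
      γ (i + 1) / Γ * ∏ ℓ ∈ Finset.Icc (N + 2) i, Real.sqrt (1 - κ * γ ℓ)
      = (∑ i ∈ Finset.Icc (N + 1) (N + n),
          γ (i + 1) * ∏ ℓ ∈ Finset.Icc (N + 2) i, Real.sqrt (1 - κ * γ ℓ)) / Γ := by
    rw [Finset.sum_div]
    apply Finset.sum_congr rfl
    intro i _
    ring
  rw [this, div_le_iff₀ hΓpos, div_mul_eq_mul_div, mul_comm κ Γ, ← div_div,
    mul_div_assoc, div_self (ne_of_gt hΓpos), mul_one]
  calc _ ≤ 2/κ := key2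
  _ = 2/κ := rfl
end

section
/- Fix d ≥ 1 and σ₀² > 0, and define σ²_{i+1} = ς(σ²_i) where ς(t) = (1/t − 1/(2(d+4)·2^{k(t)+1}σ₀²))^{−1} with k(t) = ⌊log(t/σ₀²)/log 2⌋, for t ≥ σ₀². Then ς(t) ≥ t·(4d+16)/(4d+15) for all t ∈ [σ₀², ∞) on which ς is finite; consequently, for any D² > σ₀², the first index M with σ²_{M−1} ≥ D² is finite, and σ²_{M−1} ≤ (10/9) D². -/
open Real

lemma pow_bounds19 (s0 t : ℝ) (hs0 : 0 < s0) (ht : s0 ≤ t) :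
    t ≤ (2 : ℝ) ^ (⌊Real.log (t / s0) / Real.log 2⌋ + 1) * s0 ∧
    (2 : ℝ) ^ (⌊Real.log (t / s0) / Real.log 2⌋ + 1) * s0 ≤ 2 * t := by
  have ht0 : 0 < t := hs0.trans_le ht
  have hu : 0 < t / s0 := div_pos ht0 hs0
  have hL : Real.log (t / s0) / Real.log 2 = Real.logb 2 (t / s0) := rfl
  rw [hL]
  set k := ⌊Real.logb 2 (t / s0)⌋ with hk
  have hrk : ((2 : ℝ) ^ (k + 1) : ℝ) = (2 : ℝ) ^ ((k : ℝ) + 1) := by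
    rw [← Real.rpow_intCast]
    push_cast
    ring_nf
  have h1 : (2 : ℝ) ^ ((k : ℝ)) ≤ t / s0 := by
    calc (2 : ℝ) ^ ((k : ℝ)) ≤ (2 : ℝ) ^ (Real.logb 2 (t / s0)) :=
          Real.rpow_le_rpow_of_exponent_le one_le_two (Int.floor_le _)
      _ = t / s0 := Real.rpow_logb (by norm_num) (by norm_num) hu
  have h2 : t / s0 < (2 : ℝ) ^ ((k : ℝ) + 1) := by
    calc t / s0 = (2 : ℝ) ^ (Real.logb 2 (t / s0)) :=
          (Real.rpow_logb (by norm_num) (by norm_num) hu).symm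
      _ < _ := Real.rpow_lt_rpow_of_exponent_lt one_lt_two (Int.lt_floor_add_one _)
  have h3 : (2 : ℝ) ^ ((k : ℝ) + 1) = 2 * (2 : ℝ) ^ ((k : ℝ)) := by
    rw [Real.rpow_add (by norm_num)]; ring
  constructor
  · rw [hrk]
    have := (div_lt_iff₀ hs0).mp h2
    linarith
  · rw [hrk, h3]
    have := (le_div_iff₀ hs0).mp h1
    nlinarith

lemma sbounds19 (d : ℕ) (t P : ℝ) (ht0 : 0 < t) (hP1 : t ≤ P) (hP2 : P ≤ 2 * t) :
    t * (4 * (d : ℝ) + 16) / (4 * (d : ℝ) + 15) ≤ (1 / t - 1 / (2 * ((d : ℝ) + 4) * P))⁻¹ ∧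
    (1 / t - 1 / (2 * ((d : ℝ) + 4) * P))⁻¹ ≤ t * (2 * (d : ℝ) + 8) / (2 * (d : ℝ) + 7) := by
  have hd0 : (0 : ℝ) ≤ d := Nat.cast_nonneg d
  have hP0 : 0 < P := ht0.trans_le hP1
  have hc : (0 : ℝ) < 2 * ((d : ℝ) + 4) := by linarith
  set a := 1 / t - 1 / (2 * ((d : ℝ) + 4) * P) with ha
  have hlow : (2 * (d : ℝ) + 7) / ((2 * (d : ℝ) + 8) * t) ≤ a := by
    have h1 : 1 / (2 * ((d : ℝ) + 4) * P) ≤ 1 / (2 * ((d : ℝ) + 4) * t) :=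
      one_div_le_one_div_of_le (by positivity) (by nlinarith)
    have h2 : 1 / t - 1 / (2 * ((d : ℝ) + 4) * t) = (2 * (d : ℝ) + 7) / ((2 * (d : ℝ) + 8) * t) := by
      field_simp
      ring
    rw [ha, ← h2]
    linarith
  have hhigh : a ≤ (4 * (d : ℝ) + 15) / ((4 * (d : ℝ) + 16) * t) := by
    have h1 : 1 / (2 * ((d : ℝ) + 4) * (2 * t)) ≤ 1 / (2 * ((d : ℝ) + 4) * P) :=
      one_div_le_one_div_of_le (by positivity) (by nlinarith)
    have h2 : 1 / t - 1 / (2 * ((d : ℝ) + 4) * (2 * t)) = (4 * (d : ℝ) + 15) / ((4 * (d : ℝ) + 16) * t) := by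
      field_simp
      ring
    rw [ha, ← h2]
    linarith
  have hL0 : (0 : ℝ) < (2 * (d : ℝ) + 7) / ((2 * (d : ℝ) + 8) * t) := by positivity
  have ha0 : 0 < a := hL0.trans_le hlow
  constructor
  · have := inv_anti₀ ha0 hhigh
    calc t * (4 * (d : ℝ) + 16) / (4 * (d : ℝ) + 15)
        = ((4 * (d : ℝ) + 15) / ((4 * (d : ℝ) + 16) * t))⁻¹ := by
          rw [inv_div]; field_simp
      _ ≤ a⁻¹ := this
  · have := inv_anti₀ hL0 hlow
    calc a⁻¹ ≤ ((2 * (d : ℝ) + 7) / ((2 * (d : ℝ) + 8) * t))⁻¹ := this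
      _ = t * (2 * (d : ℝ) + 8) / (2 * (d : ℝ) + 7) := by
          rw [inv_div]; field_simp

theorem stmt19 (d : ℕ) (hd : 1 ≤ d) (s0 : ℝ) (hs0 : 0 < s0)
    (ς : ℝ → ℝ)
    (hς : ∀ t : ℝ, ς t =
      (1 / t - 1 / (2 * ((d : ℝ) + 4) *
        ((2 : ℝ) ^ (⌊Real.log (t / s0) / Real.log 2⌋ + 1) * s0)))⁻¹)
    (σ : ℕ → ℝ) (hσ0 : σ 0 = s0) (hσrec : ∀ i, σ (i + 1) = ς (σ i))
    (D2 : ℝ) (hD : s0 < D2) :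
    (∀ t : ℝ, s0 ≤ t → t * (4 * (d : ℝ) + 16) / (4 * (d : ℝ) + 15) ≤ ς t) ∧
    (∃ i, D2 ≤ σ i) ∧
    (∀ i, D2 ≤ σ i → (∀ j < i, σ j < D2) → σ i ≤ 10 / 9 * D2) := by
  have hd1 : (1 : ℝ) ≤ d := by exact_mod_cast hd
  have key : ∀ t : ℝ, s0 ≤ t →
      t * (4 * (d : ℝ) + 16) / (4 * (d : ℝ) + 15) ≤ ς t ∧
      ς t ≤ t * (2 * (d : ℝ) + 8) / (2 * (d : ℝ) + 7) := by
    intro t ht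
    obtain ⟨hP1, hP2⟩ := pow_bounds19 s0 t hs0 ht
    rw [hς t]
    exact sbounds19 d t _ (hs0.trans_le ht) hP1 hP2
  refine ⟨fun t ht => (key t ht).1, ?_, ?_⟩
  · -- growth: σ i ≥ s0 * r^i
    set r : ℝ := (4 * (d : ℝ) + 16) / (4 * (d : ℝ) + 15) with hr
    have hr1 : 1 < r := by
      rw [hr]
      rw [lt_div_iff₀ (by linarith)]
      linarith
    have hgrow : ∀ i, s0 * r ^ i ≤ σ i := by
      intro i
      induction i with
      | zero => simp [hσ0]
      | succ n ih =>
        have hs0n : s0 ≤ σ n := by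
          calc s0 = s0 * 1 := by ring
            _ ≤ s0 * r ^ n := by
                apply mul_le_mul_of_nonneg_left (one_le_pow₀ hr1.le) hs0.le
            _ ≤ σ n := ih
        have := (key (σ n) hs0n).1
        rw [hσrec n]
        calc s0 * r ^ (n + 1) = (s0 * r ^ n) * r := by ring
          _ ≤ σ n * r := by
              apply mul_le_mul_of_nonneg_right ih (by linarith)
          _ = σ n * (4 * (d : ℝ) + 16) / (4 * (d : ℝ) + 15) := by
              rw [hr]; ring
          _ ≤ ς (σ n) := this
    obtain ⟨n, hn⟩ := pow_unbounded_of_one_lt (D2 / s0) hr1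
    refine ⟨n, ?_⟩
    have : D2 < s0 * r ^ n := by
      have := (div_lt_iff₀ hs0).mp hn
      linarith
    linarith [hgrow n]
  · intro i hi hprev
    match i with
    | 0 => rw [hσ0] at hi; linarith
    | Nat.succ m =>
      have hm : σ m < D2 := hprev m (Nat.lt_succ_self m)
      have hs0m : s0 ≤ σ m := by
        -- from growth again; redo minimal: induction
        have hgrow : ∀ i, s0 ≤ σ i := by
          intro i
          induction i with
          | zero => simp [hσ0]
          | succ n ih =>
            have h := (key (σ n) ih).1
            rw [hσrec n]
            calc s0 ≤ σ n := ih
              _ = σ n * 1 := by ring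
              _ ≤ σ n * (4 * (d : ℝ) + 16) / (4 * (d : ℝ) + 15) := by
                  rw [mul_div_assoc]
                  apply mul_le_mul_of_nonneg_left ?_ (by linarith)
                  rw [le_div_iff₀ (by linarith)]
                  linarith
              _ ≤ ς (σ n) := h
        exact hgrow m
      have hub := (key (σ m) hs0m).2
      rw [hσrec m] at hi ⊢
      have h9 : σ m * (2 * (d : ℝ) + 8) / (2 * (d : ℝ) + 7) ≤ 10 / 9 * D2 := by
        rw [div_le_iff₀ (by linarith)]
        nlinarith [hs0.trans_le hs0m, hs0.trans hD]
      linarith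
end
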